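/- arXiv:1611.02903 — 7 statements merged into one kernel-verified Lean document; each statement's English description precedes it below -/
import Mathlib

section
/- Let w be an (m,M)-regular distance generating function with respect to (Z, ‖·‖). Then for every l ≥ 1 and points u_0, u_1, ..., u_l ∈ Z: (dw)_{u_0}(u_l) ≤ (l M / m) · Σ_{i=1}^{l} min{(dw)_{u_{i-1}}(u_i), (dw)_{u_i}(u_{i-1})}. -/
/-! Along the chain, `p (u₀ - u_l) ≤ ∑ p (u_i - u_{i+1})`, so by Cauchy–Schwarz
`p (u₀ - u_l)² ≤ l ∑ p (u_i - u_{i+1})²`. Strong convexity bounds each square by `2/m` times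
either Bregman distance between consecutive points, and smoothness bounds
`(dw)_{u₀}(u_l)` by `M/2 · p (u₀ - u_l)²`. -/

open Finset

section Seminorm

variable {E F : Type*} [AddCommGroup E] [FunLike F E ℝ] [AddGroupSeminormClass F E ℝ]

theorem apply_sub_le_sum_range_apply_sub (p : F) (u : ℕ → E) (l : ℕ) :
    p (u 0 - u l) ≤ ∑ i ∈ range l, p (u i - u (i + 1)) := by
  rw [← sum_range_sub' u l]
  exact le_sum_of_subadditive p (map_zero p).le (map_add_le_add p) _ _

theorem sq_apply_sub_le_mul_sum_sq (p : F) (u : ℕ → E) (l : ℕ) :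
    p (u 0 - u l) ^ 2 ≤ l * ∑ i ∈ range l, p (u i - u (i + 1)) ^ 2 := calc
  p (u 0 - u l) ^ 2 ≤ (∑ i ∈ range l, p (u i - u (i + 1))) ^ 2 := by
    gcongr
    exact apply_sub_le_sum_range_apply_sub p u l
  _ ≤ l * ∑ i ∈ range l, p (u i - u (i + 1)) ^ 2 := by
    simpa using sq_sum_le_card_mul_sum_sq (s := range l) (f := fun i => p (u i - u (i + 1)))

theorem mul_sq_apply_sub_le_min_of_forall_le {s : Set E} {d : E → E → ℝ} {m : ℝ} (p : F)
    (hd : ∀ z ∈ s, ∀ z' ∈ s, m / 2 * p (z - z') ^ 2 ≤ d z z') {z z' : E} (hz : z ∈ s)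
    (hz' : z' ∈ s) : m / 2 * p (z - z') ^ 2 ≤ min (d z z') (d z' z) :=
  le_min (hd z hz z' hz') (map_sub_rev p z z' ▸ hd z' hz' z hz)

end Seminorm

theorem bregman_chain_bound_general {Z : Type*} [NormedAddCommGroup Z] [InnerProductSpace ℝ Z]
    (Zs : Set Z) (p : Seminorm ℝ Z)
    (m M : ℝ) (hm : 0 < m) (hM : 0 < M)
    (dw : Z → Z → ℝ)
    (hstrong : ∀ z ∈ Zs, ∀ z' ∈ Zs, m / 2 * (p (z - z'))^2 ≤ dw z z')
    (hsmooth : ∀ z ∈ Zs, ∀ z' ∈ Zs, dw z z' ≤ M / 2 * (p (z - z'))^2)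
    (l : ℕ) (u : ℕ → Z) (hu : ∀ i ≤ l, u i ∈ Zs) :
    dw (u 0) (u l)
      ≤ (l : ℝ) * M / m *
        ∑ i ∈ Finset.range l, min (dw (u i) (u (i + 1))) (dw (u (i + 1)) (u i)) := calc
  dw (u 0) (u l) ≤ M / 2 * p (u 0 - u l) ^ 2 := hsmooth _ (hu 0 l.zero_le) _ (hu l le_rfl)
  _ ≤ M / 2 * (l * ∑ i ∈ range l, p (u i - u (i + 1)) ^ 2) := by
    gcongr
    exact sq_apply_sub_le_mul_sum_sq p u l
  _ = l * M / m * ∑ i ∈ range l, m / 2 * p (u i - u (i + 1)) ^ 2 := by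
    rw [← mul_sum]
    field_simp
  _ ≤ l * M / m * ∑ i ∈ range l, min (dw (u i) (u (i + 1))) (dw (u (i + 1)) (u i)) := by
    gcongr with i hi
    have hi : i < l := mem_range.mp hi
    exact mul_sq_apply_sub_le_min_of_forall_le p hstrong (hu i hi.le) (hu (i + 1) hi)

/-- Let `w` (with Bregman distance `dw`) be an `(m,M)`-regular distance generating
function with respect to `(Zs, p)`, so that
`(m/2)·p(z-z')² ≤ (dw)_z(z') ≤ (M/2)·p(z-z')²` on `Zs`. Then for every `l ≥ 1` and
points `u_0, …, u_l ∈ Zs`: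
`(dw)_{u_0}(u_l) ≤ (lM/m) · Σ_{i=1}^{l} min{(dw)_{u_{i-1}}(u_i), (dw)_{u_i}(u_{i-1})}`. -/
theorem bregman_chain_bound {Z : Type*} [NormedAddCommGroup Z] [InnerProductSpace ℝ Z]
    [FiniteDimensional ℝ Z]
    (Zs : Set Z) (hZs : Convex ℝ Zs) (p : Seminorm ℝ Z)
    (w : Z → ℝ) (g : Z → Z) (m M : ℝ) (hm : 0 < m) (hM : 0 < M)
    (dw : Z → Z → ℝ)
    (hdw : ∀ z z' : Z, dw z z' = w z' - w z - (inner ℝ (g z) (z' - z) : ℝ))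
    (hstrong : ∀ z ∈ Zs, ∀ z' ∈ Zs, m / 2 * (p (z - z'))^2 ≤ dw z z')
    (hsmooth : ∀ z ∈ Zs, ∀ z' ∈ Zs, dw z z' ≤ M / 2 * (p (z - z'))^2)
    (l : ℕ) (hl : 1 ≤ l) (u : ℕ → Z) (hu : ∀ i ≤ l, u i ∈ Zs) :
    dw (u 0) (u l)
      ≤ (l : ℝ) * M / m *
        ∑ i ∈ Finset.range l, min (dw (u i) (u (i + 1))) (dw (u (i + 1)) (u i)) :=
  bregman_chain_bound_general Zs p m M hm hM dw hstrong hsmooth l u hu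
end

section
/- In the NE-HPE framework, for every k ≥ 1 and z ∈ dom w: (dw)_{z_{k-1}}(z) - (dw)_{z_k}(z) + η_{k-1} ≥ (1-σ)(dw)_{z_{k-1}}(z̃_k) + λ_k(⟨r_k, z̃_k - z⟩ + ε_k) + η_k. -/
/-! The Bregman distance satisfies the four-point identity
`D(x, z) - D(y, z) = D(x, u) - D(y, u) + ⟪∇w(x) - ∇w(y), u - z⟫`.
Taking `x = z_{k-1}`, `y = z_k`, `u = z̃_k`, the inner product term is `λ_k ⟪r_k, z̃_k - z⟫`,
and the error condition bounds `D(z_{k-1}, z̃_k) - D(z_k, z̃_k)` from below. -/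

section Bregman

variable {E : Type*} [NormedAddCommGroup E] [InnerProductSpace ℝ E]

/-- The Bregman distance `D(x, y)` of `w`, with `g` playing the role of `∇w`. -/
def bregmanDiv (w : E → ℝ) (g : E → E) (x y : E) : ℝ :=
  w y - w x - inner ℝ (g x) (y - x)

theorem bregmanDiv_sub_bregmanDiv (w : E → ℝ) (g : E → E) (x y u z : E) :
    bregmanDiv w g x z - bregmanDiv w g y z
      = bregmanDiv w g x u - bregmanDiv w g y u + inner ℝ (g x - g y) (u - z) := by
  simp only [bregmanDiv, inner_sub_left, inner_sub_right]
  ring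

end Bregman

theorem nehpe_key_inequality_general {Z : Type*} [NormedAddCommGroup Z] [InnerProductSpace ℝ Z]
    (w : Z → ℝ) (g : Z → Z)
    (dw : Z → Z → ℝ)
    (hdw : ∀ z z' : Z, dw z z' = w z' - w z - (inner ℝ (g z) (z' - z) : ℝ))
    (z ztil : ℕ → Z) (lam eps eta : ℕ → ℝ) (r : ℕ → Z) (σ : ℝ)
    (hlam : ∀ k, 1 ≤ k → 0 < lam k)
    (hr : ∀ k, 1 ≤ k → r k = (1 / lam k) • (g (z (k - 1)) - g (z k)))
    (herr : ∀ k, 1 ≤ k →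
      dw (z k) (ztil k) + lam k * eps k + eta k ≤ σ * dw (z (k - 1)) (ztil k) + eta (k - 1))
    (k : ℕ) (hk : 1 ≤ k) (zz : Z) :
    dw (z (k - 1)) zz - dw (z k) zz + eta (k - 1)
      ≥ (1 - σ) * dw (z (k - 1)) (ztil k)
        + lam k * ((inner ℝ (r k) (ztil k - zz) : ℝ) + eps k) + eta k := by
  obtain rfl : dw = bregmanDiv w g := funext₂ hdw
  have hscaled : lam k * inner ℝ (r k) (ztil k - zz)
      = inner ℝ (g (z (k - 1)) - g (z k)) (ztil k - zz) := by
    rw [hr k hk, real_inner_smul_left, ← mul_assoc, mul_one_div_cancel (hlam k hk).ne', one_mul]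
  have hfour := bregmanDiv_sub_bregmanDiv w g (z (k - 1)) (z k) (ztil k) zz
  linarith [herr k hk]

/-- NE-HPE framework, key inequality. With `dw` the Bregman distance of a distance
generating function `w` with gradient `g`, iterates `z_k, z̃_k`, `λ_k > 0`,
`r_k = (1/λ_k)(∇w(z_{k-1}) - ∇w(z_k))`, `ε_k, η_k ≥ 0`, `σ ∈ [0,1]`, and the error
condition `(dw)_{z_k}(z̃_k) + λ_k ε_k + η_k ≤ σ (dw)_{z_{k-1}}(z̃_k) + η_{k-1}`, one has
for every `k ≥ 1` and every `z`:
`(dw)_{z_{k-1}}(z) - (dw)_{z_k}(z) + η_{k-1}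
  ≥ (1-σ)(dw)_{z_{k-1}}(z̃_k) + λ_k(⟨r_k, z̃_k - z⟩ + ε_k) + η_k`. -/
theorem nehpe_key_inequality {Z : Type*} [NormedAddCommGroup Z] [InnerProductSpace ℝ Z]
    [FiniteDimensional ℝ Z]
    (w : Z → ℝ) (g : Z → Z)
    (dw : Z → Z → ℝ)
    (hdw : ∀ z z' : Z, dw z z' = w z' - w z - (inner ℝ (g z) (z' - z) : ℝ))
    (z ztil : ℕ → Z) (lam eps eta : ℕ → ℝ) (r : ℕ → Z) (σ : ℝ)
    (hσ : σ ∈ Set.Icc (0 : ℝ) 1)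
    (hlam : ∀ k, 1 ≤ k → 0 < lam k)
    (heps : ∀ k, 1 ≤ k → 0 ≤ eps k)
    (heta : ∀ k, 0 ≤ eta k)
    (hr : ∀ k, 1 ≤ k → r k = (1 / lam k) • (g (z (k - 1)) - g (z k)))
    (herr : ∀ k, 1 ≤ k →
      dw (z k) (ztil k) + lam k * eps k + eta k ≤ σ * dw (z (k - 1)) (ztil k) + eta (k - 1))
    (k : ℕ) (hk : 1 ≤ k) (zz : Z) :
    dw (z (k - 1)) zz - dw (z k) zz + eta (k - 1)
      ≥ (1 - σ) * dw (z (k - 1)) (ztil k)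
        + lam k * ((inner ℝ (r k) (ztil k - zz) : ℝ) + eps k) + eta k :=
  nehpe_key_inequality_general w g dw hdw z ztil lam eps eta r σ hlam hr herr k hk zz
end

section
/- In the NE-HPE framework with σ < 1 and w (m,M)-regular, for every t ∈ ℝ and every k ≥ 1 there exists an index i ≤ k such that ‖r_i‖* ≤ (2M/√m)·√( ((1+σ)(dw)_0 + 2η_0)/(1-σ) · λ_i^{t-2}/Σ_{j=1}^k λ_j^t ) and ε_i ≤ ((1+σ)(dw)_0 + 2η_0)/(1-σ) · λ_i^{t-1}/Σ_{j=1}^k λ_j^t, where (dw)_0 = inf{(dw)_{z_0}(z*) : z* ∈ T^{-1}(0)}. -/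
/-!
For each zero `y` of `T`, the inclusion `r_j ∈ T^{[ε_j]}(z̃_j)` together with the three-point
identity of the Bregman distance gives
`(dw)_{z_j}(y) + (dw)_{z_{j-1}}(z̃_j) ≤ (dw)_{z_{j-1}}(y) + (dw)_{z_j}(z̃_j) + λ_j ε_j`.
Telescoping this and the error condition bounds `Σ_{j ≤ k} d_j` by
`((1+σ)(dw)_0 + 2η_0)/(1-σ)`, where `d_j = (dw)_{z_{j-1}}(z̃_j) + (dw)_{z_j}(z̃_j) + λ_j ε_j`,
so some index `i` has `d_i` at most its share `λ_i^t / Σ_j λ_j^t` of that bound. There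
`λ_i ε_i ≤ d_i`, and `‖r_i‖* ≤ (M/λ_i)‖z_{i-1} - z_i‖` with `m‖z_{i-1} - z_i‖² ≤ 4 d_i` by strong
convexity of `w` and the triangle inequality through `z̃_i`.
-/

/-- The dual (extended) seminorm of a seminorm `p` on a real inner product space. -/
noncomputable def dualSN {Z : Type*} [NormedAddCommGroup Z] [InnerProductSpace ℝ Z]
    (p : Seminorm ℝ Z) (u : Z) : EReal :=
  ⨆ v : {v : Z // p v ≤ 1}, ((inner ℝ u v.1 : ℝ) : EReal)

def IsMonotoneOp {Z : Type*} [NormedAddCommGroup Z] [InnerProductSpace ℝ Z]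
    (T : Z → Set Z) : Prop :=
  ∀ u₁ v₁ u₂ v₂ : Z, u₂ ∈ T u₁ → v₂ ∈ T v₁ → 0 ≤ (inner ℝ (u₂ - v₂) (u₁ - v₁) : ℝ)

def IsMaximalMonotoneOp {Z : Type*} [NormedAddCommGroup Z] [InnerProductSpace ℝ Z]
    (T : Z → Set Z) : Prop :=
  IsMonotoneOp T ∧
    ∀ u v : Z, (∀ u₁ u₂ : Z, u₂ ∈ T u₁ → 0 ≤ (inner ℝ (v - u₂) (u - u₁) : ℝ)) → v ∈ T u

/-- The `ε`-enlargement `T^{[ε]}` of a monotone operator `T`. -/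
def epsEnlargement {Z : Type*} [NormedAddCommGroup Z] [InnerProductSpace ℝ Z]
    (T : Z → Set Z) (ε : ℝ) (v : Z) : Set Z :=
  {v' : Z | ∀ v₁ v₂ : Z, v₂ ∈ T v₁ → -ε ≤ (inner ℝ (v' - v₂) (v - v₁) : ℝ)}

theorem sum_Icc_le_sub_of_le_sub {a b : ℕ → ℝ} (n : ℕ)
    (h : ∀ j, 1 ≤ j → j ≤ n → a j ≤ b (j - 1) - b j) :
    ∑ j ∈ Finset.Icc 1 n, a j ≤ b 0 - b n := by
  induction n with
  | zero => simp
  | succ n ih =>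
    rw [Finset.sum_Icc_succ_top (by omega)]
    have hlast := h (n + 1) (by omega) le_rfl
    have hprev := ih fun j hj _ => h j hj (by omega)
    simp only [Nat.add_sub_cancel] at hlast
    linarith

theorem le_div_of_forall_le_sInf_image {Y : Type*} {f : Y → ℝ} {s : Set Y} (hs : s.Nonempty)
    {S σ c : ℝ} (hσ0 : 0 ≤ σ) (hσ1 : σ < 1) (h : ∀ y ∈ s, (1 - σ) * S ≤ (1 + σ) * f y + c) :
    S ≤ ((1 + σ) * sInf (f '' s) + c) / (1 - σ) := by
  have hinf : ((1 - σ) * S - c) / (1 + σ) ≤ sInf (f '' s) := by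
    refine le_csInf (hs.image f) ?_
    rintro _ ⟨y, hy, rfl⟩
    rw [div_le_iff₀ (by linarith)]
    linarith [h y hy]
  rw [div_le_iff₀ (by linarith)] at hinf
  rw [le_div_iff₀ (by linarith)]
  linarith

theorem inv_mul_le_mul_sqrt_of_mul_sq_le {m M lam q B : ℝ} (hm : 0 < m) (hM : 0 ≤ M)
    (hlam : 0 < lam) (hq : 0 ≤ q) (hqB : m * q ^ 2 ≤ 4 * B) :
    1 / lam * (M * q) ≤ 2 * M / Real.sqrt m * Real.sqrt (B / lam ^ 2) := by
  have hsm := Real.sqrt_pos.2 hm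
  have hq' : q * Real.sqrt m ≤ 2 * Real.sqrt B := by
    rw [← Real.sqrt_sq hq, ← Real.sqrt_mul (sq_nonneg q), ← Real.sqrt_sq zero_le_two,
      ← Real.sqrt_mul (sq_nonneg 2)]
    exact Real.sqrt_le_sqrt (by linarith)
  rw [Real.sqrt_div' _ (sq_nonneg lam), Real.sqrt_sq hlam.le]
  calc 1 / lam * (M * q) = M / lam * (q * Real.sqrt m) / Real.sqrt m := by field_simp
    _ ≤ M / lam * (2 * Real.sqrt B) / Real.sqrt m := by gcongr
    _ = 2 * M / Real.sqrt m * (Real.sqrt B / lam) := by ring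

section NEHPE

variable {Z : Type*} [NormedAddCommGroup Z] [InnerProductSpace ℝ Z]

theorem le_dualSN (p : Seminorm ℝ Z) (u : Z) {v : Z} (hv : p v ≤ 1) :
    ((inner ℝ u v : ℝ) : EReal) ≤ dualSN p u :=
  le_iSup (fun v : {v : Z // p v ≤ 1} => ((inner ℝ u v.1 : ℝ) : EReal)) ⟨v, hv⟩

theorem dualSN_smul_le (p : Seminorm ℝ Z) {a c : ℝ} {u : Z} (ha : 0 ≤ a)
    (hu : dualSN p u ≤ (c : EReal)) : dualSN p (a • u) ≤ ((a * c : ℝ) : EReal) := by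
  refine iSup_le fun ⟨v, hv⟩ => EReal.coe_le_coe_iff.2 ?_
  rw [real_inner_smul_left]
  exact mul_le_mul_of_nonneg_left (EReal.coe_le_coe_iff.1 ((le_dualSN p u hv).trans hu)) ha

variable {w : Z → ℝ} {g : Z → Z} {dw : Z → Z → ℝ}

theorem bregman_three_point (hdw : ∀ z z' : Z, dw z z' = w z' - w z - inner ℝ (g z) (z' - z))
    (a b c : Z) : dw a c - dw b c - dw a b = inner ℝ (g a - g b) (b - c) := by
  simp only [hdw, inner_sub_left, inner_sub_right]
  ring

theorem bregman_le_of_mem_epsEnlargement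
    (hdw : ∀ z z' : Z, dw z z' = w z' - w z - inner ℝ (g z) (z' - z))
    {T : Z → Set Z} {a b c r y : Z} {lam ε : ℝ} (hy : 0 ∈ T y) (hlam : 0 ≤ lam)
    (hr : lam • r = g a - g b) (hincl : r ∈ epsEnlargement T ε c) :
    dw b y + dw a c ≤ dw a y + dw b c + lam * ε := by
  have hthree_y := bregman_three_point hdw a b y
  have hthree_c := bregman_three_point hdw a b c
  rw [← hr, real_inner_smul_left] at hthree_y hthree_c
  have hinc : -ε ≤ inner ℝ r (c - y) := by simpa using hincl y 0 hy
  have hsplit : inner ℝ r (b - y) = inner ℝ r (b - c) + inner ℝ r (c - y) := by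
    rw [← inner_add_right, sub_add_sub_cancel]
  nlinarith [mul_le_mul_of_nonneg_left hinc hlam]

theorem bregman_nonneg {Zs : Set Z} {p : Seminorm ℝ Z} {m : ℝ} (hm : 0 ≤ m)
    (hstrong : ∀ z ∈ Zs, ∀ z' ∈ Zs, m / 2 * (p (z - z')) ^ 2 ≤ dw z z')
    {a b : Z} (ha : a ∈ Zs) (hb : b ∈ Zs) : 0 ≤ dw a b :=
  (by positivity : 0 ≤ m / 2 * (p (a - b)) ^ 2).trans (hstrong a ha b hb)

theorem mul_sq_seminorm_sub_le_bregman {Zs : Set Z} {p : Seminorm ℝ Z} {m : ℝ} (hm : 0 ≤ m)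
    (hstrong : ∀ z ∈ Zs, ∀ z' ∈ Zs, m / 2 * (p (z - z')) ^ 2 ≤ dw z z')
    {a b c : Z} (ha : a ∈ Zs) (hb : b ∈ Zs) (hc : c ∈ Zs) :
    m * p (a - b) ^ 2 ≤ 4 * (dw a c + dw b c) := by
  have htri : p (a - b) ≤ p (a - c) + p (b - c) := by
    simpa only [sub_sub_sub_cancel_right] using map_sub_le_add p (a - c) (b - c)
  have hsq : p (a - b) ^ 2 ≤ (p (a - c) + p (b - c)) ^ 2 :=
    pow_le_pow_left₀ (apply_nonneg p _) htri 2
  nlinarith [hstrong a ha c hc, hstrong b hb c hc, mul_le_mul_of_nonneg_left hsq hm,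
    mul_nonneg hm (sq_nonneg (p (a - c) - p (b - c)))]

theorem nehpe_sum_le {Zs : Set Z} {T : Z → Set Z} {z ztil r : ℕ → Z}
    {lam eps eta : ℕ → ℝ} {σ : ℝ}
    (hdw : ∀ z z' : Z, dw z z' = w z' - w z - inner ℝ (g z) (z' - z))
    (hnonneg : ∀ a ∈ Zs, ∀ b ∈ Zs, 0 ≤ dw a b)
    (hzZ : ∀ k, z k ∈ Zs) (hztilZ : ∀ k, ztil k ∈ Zs)
    (hσ0 : 0 ≤ σ) (hσ1 : σ < 1)
    (hlam : ∀ k, 1 ≤ k → 0 < lam k) (heta : ∀ k, 0 ≤ eta k)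
    (hr : ∀ k, 1 ≤ k → r k = (1 / lam k) • (g (z (k - 1)) - g (z k)))
    (hincl : ∀ k, 1 ≤ k → r k ∈ epsEnlargement T (eps k) (ztil k))
    (herr : ∀ k, 1 ≤ k →
      dw (z k) (ztil k) + lam k * eps k + eta k ≤ σ * dw (z (k - 1)) (ztil k) + eta (k - 1))
    {y : Z} (hy : 0 ∈ T y) (hyZ : y ∈ Zs) (n : ℕ) :
    (1 - σ) * ∑ j ∈ Finset.Icc 1 n,
        (dw (z (j - 1)) (ztil j) + (dw (z j) (ztil j) + lam j * eps j))
      ≤ (1 + σ) * dw (z 0) y + 2 * eta 0 := by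
  have hprox : (1 - σ) * ∑ j ∈ Finset.Icc 1 n, dw (z (j - 1)) (ztil j)
      ≤ dw (z 0) y + eta 0 - (dw (z n) y + eta n) := by
    rw [Finset.mul_sum]
    refine sum_Icc_le_sub_of_le_sub (b := fun j => dw (z j) y + eta j) n fun j hj _ => ?_
    have hstep := bregman_le_of_mem_epsEnlargement hdw hy (hlam j hj).le
      (by rw [hr j hj, one_div, smul_inv_smul₀ (hlam j hj).ne']) (hincl j hj)
    linarith [herr j hj]
  have herr_sum : ∑ j ∈ Finset.Icc 1 n, (dw (z j) (ztil j) + lam j * eps j)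
      - σ * ∑ j ∈ Finset.Icc 1 n, dw (z (j - 1)) (ztil j) ≤ eta 0 - eta n := by
    rw [Finset.mul_sum, ← Finset.sum_sub_distrib]
    exact sum_Icc_le_sub_of_le_sub n fun j hj _ => by linarith [herr j hj]
  have hD : 0 ≤ ∑ j ∈ Finset.Icc 1 n, dw (z (j - 1)) (ztil j) :=
    Finset.sum_nonneg fun j _ => hnonneg _ (hzZ _) _ (hztilZ _)
  have hzy := hnonneg _ (hzZ n) _ hyZ
  rw [Finset.sum_add_distrib]
  nlinarith [heta n, mul_le_mul_of_nonneg_left herr_sum (by linarith : 0 ≤ 1 - σ)]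

end NEHPE

theorem nehpe_pointwise_general {Z : Type*} [NormedAddCommGroup Z] [InnerProductSpace ℝ Z]
    (Zs : Set Z) (p : Seminorm ℝ Z)
    (w : Z → ℝ) (g : Z → Z) (m M : ℝ) (hm : 0 < m) (hM : 0 < M)
    (dw : Z → Z → ℝ)
    (hdw : ∀ z z' : Z, dw z z' = w z' - w z - (inner ℝ (g z) (z' - z) : ℝ))
    (hstrong : ∀ z ∈ Zs, ∀ z' ∈ Zs, m / 2 * (p (z - z'))^2 ≤ dw z z')
    (hlip : ∀ z ∈ Zs, ∀ z' ∈ Zs, dualSN p (g z - g z') ≤ ((M * p (z - z') : ℝ) : EReal))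
    (T : Z → Set Z)
    (hdom : ∀ v : Z, (T v).Nonempty → v ∈ Zs)
    (hT0 : ∃ zs : Z, 0 ∈ T zs)
    (z ztil : ℕ → Z) (hzZ : ∀ k, z k ∈ Zs) (hztilZ : ∀ k, ztil k ∈ Zs)
    (lam eps eta : ℕ → ℝ) (r : ℕ → Z) (σ : ℝ)
    (hσ0 : 0 ≤ σ) (hσ1 : σ < 1)
    (hlam : ∀ k, 1 ≤ k → 0 < lam k)
    (heps : ∀ k, 1 ≤ k → 0 ≤ eps k)
    (heta : ∀ k, 0 ≤ eta k)
    (hr : ∀ k, 1 ≤ k → r k = (1 / lam k) • (g (z (k - 1)) - g (z k)))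
    (hincl : ∀ k, 1 ≤ k → r k ∈ epsEnlargement T (eps k) (ztil k))
    (herr : ∀ k, 1 ≤ k →
      dw (z k) (ztil k) + lam k * eps k + eta k ≤ σ * dw (z (k - 1)) (ztil k) + eta (k - 1))
    (dw0 : ℝ) (hdw0 : dw0 = sInf ((fun zs => dw (z 0) zs) '' {zs : Z | 0 ∈ T zs}))
    (t : ℝ) (k : ℕ) (hk : 1 ≤ k) :
    ∃ i, 1 ≤ i ∧ i ≤ k ∧
      dualSN p (r i)
          ≤ ((2 * M / Real.sqrt m *
              Real.sqrt (((1 + σ) * dw0 + 2 * eta 0) / (1 - σ) *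
                (lam i ^ (t - 2) / ∑ j ∈ Finset.Icc 1 k, lam j ^ t)) : ℝ) : EReal) ∧
      eps i ≤ ((1 + σ) * dw0 + 2 * eta 0) / (1 - σ) *
          (lam i ^ (t - 1) / ∑ j ∈ Finset.Icc 1 k, lam j ^ t) := by
  have hnonneg : ∀ a ∈ Zs, ∀ b ∈ Zs, 0 ≤ dw a b := fun a ha b hb =>
    bregman_nonneg hm.le hstrong ha hb
  have hsum : ∑ j ∈ Finset.Icc 1 k,
      (dw (z (j - 1)) (ztil j) + (dw (z j) (ztil j) + lam j * eps j))
        ≤ ((1 + σ) * dw0 + 2 * eta 0) / (1 - σ) :=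
    hdw0 ▸ le_div_of_forall_le_sInf_image hT0 hσ0 hσ1 fun y hy =>
      nehpe_sum_le hdw hnonneg hzZ hztilZ hσ0 hσ1 hlam heta hr hincl herr hy (hdom y ⟨0, hy⟩) k
  set A := ((1 + σ) * dw0 + 2 * eta 0) / (1 - σ)
  set Λ := ∑ j ∈ Finset.Icc 1 k, lam j ^ t
  have hne : (Finset.Icc 1 k).Nonempty := ⟨1, Finset.mem_Icc.2 ⟨le_rfl, hk⟩⟩
  have hΛ : 0 < Λ :=
    Finset.sum_pos (fun j hj => Real.rpow_pos_of_pos (hlam j (Finset.mem_Icc.1 hj).1) t) hne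
  have hA : A = ∑ j ∈ Finset.Icc 1 k, A * (lam j ^ t / Λ) := by
    rw [← Finset.mul_sum, ← Finset.sum_div, div_self hΛ.ne', mul_one]
  obtain ⟨i, hi, hdi⟩ := Finset.exists_le_of_sum_le hne (hsum.trans_eq hA)
  obtain ⟨hi1, hik⟩ := Finset.mem_Icc.1 hi
  have hli := hlam i hi1
  have hD := hnonneg _ (hzZ (i - 1)) _ (hztilZ i)
  have hE := hnonneg _ (hzZ i) _ (hztilZ i)
  refine ⟨i, hi1, hik, ?_, ?_⟩
  · rw [Real.rpow_sub hli, Real.rpow_two, div_right_comm, ← mul_div_assoc, hr i hi1]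
    refine (dualSN_smul_le p (by positivity) (hlip _ (hzZ _) _ (hzZ _))).trans
      (EReal.coe_le_coe_iff.2 (inv_mul_le_mul_sqrt_of_mul_sq_le hm hM.le hli (apply_nonneg p _) ?_))
    nlinarith [mul_sq_seminorm_sub_le_bregman hm.le hstrong (hzZ (i - 1)) (hzZ i) (hztilZ i),
      mul_nonneg hli.le (heps i hi1)]
  · rw [Real.rpow_sub_one hli.ne', div_right_comm, ← mul_div_assoc, le_div_iff₀ hli]
    linarith

/-- Pointwise estimates for the NE-HPE framework with `σ < 1` and `w` an
`(m,M)`-regular distance generating function: for every `t ∈ ℝ` and `k ≥ 1` there is an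
index `i ≤ k` with
`‖r_i‖* ≤ (2M/√m)·√( ((1+σ)(dw)_0 + 2η_0)/(1-σ) · λ_i^{t-2}/Σ_{j=1}^k λ_j^t )` and
`ε_i ≤ ((1+σ)(dw)_0 + 2η_0)/(1-σ) · λ_i^{t-1}/Σ_{j=1}^k λ_j^t`, where
`(dw)_0 = inf {(dw)_{z_0}(z*) : z* ∈ T⁻¹(0)}`. -/
theorem nehpe_pointwise {Z : Type*} [NormedAddCommGroup Z] [InnerProductSpace ℝ Z]
    [FiniteDimensional ℝ Z]
    (Zs : Set Z) (hZs : Convex ℝ Zs) (hZsclosed : IsClosed Zs) (p : Seminorm ℝ Z)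
    (w : Z → ℝ) (g : Z → Z) (m M : ℝ) (hm : 0 < m) (hM : 0 < M)
    (dw : Z → Z → ℝ)
    (hdw : ∀ z z' : Z, dw z z' = w z' - w z - (inner ℝ (g z) (z' - z) : ℝ))
    (hstrong : ∀ z ∈ Zs, ∀ z' ∈ Zs, m / 2 * (p (z - z'))^2 ≤ dw z z')
    (hlip : ∀ z ∈ Zs, ∀ z' ∈ Zs, dualSN p (g z - g z') ≤ ((M * p (z - z') : ℝ) : EReal))
    (T : Z → Set Z) (hT : IsMaximalMonotoneOp T)
    (hdom : ∀ v : Z, (T v).Nonempty → v ∈ Zs)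
    (hT0 : ∃ zs : Z, 0 ∈ T zs)
    (z ztil : ℕ → Z) (hzZ : ∀ k, z k ∈ Zs) (hztilZ : ∀ k, ztil k ∈ Zs)
    (lam eps eta : ℕ → ℝ) (r : ℕ → Z) (σ : ℝ)
    (hσ0 : 0 ≤ σ) (hσ1 : σ < 1)
    (hlam : ∀ k, 1 ≤ k → 0 < lam k)
    (heps : ∀ k, 1 ≤ k → 0 ≤ eps k)
    (heta : ∀ k, 0 ≤ eta k)
    (hr : ∀ k, 1 ≤ k → r k = (1 / lam k) • (g (z (k - 1)) - g (z k)))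
    (hincl : ∀ k, 1 ≤ k → r k ∈ epsEnlargement T (eps k) (ztil k))
    (herr : ∀ k, 1 ≤ k →
      dw (z k) (ztil k) + lam k * eps k + eta k ≤ σ * dw (z (k - 1)) (ztil k) + eta (k - 1))
    (dw0 : ℝ) (hdw0 : dw0 = sInf ((fun zs => dw (z 0) zs) '' {zs : Z | 0 ∈ T zs}))
    (t : ℝ) (k : ℕ) (hk : 1 ≤ k) :
    ∃ i, 1 ≤ i ∧ i ≤ k ∧
      dualSN p (r i)
          ≤ ((2 * M / Real.sqrt m *
              Real.sqrt (((1 + σ) * dw0 + 2 * eta 0) / (1 - σ) *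
                (lam i ^ (t - 2) / ∑ j ∈ Finset.Icc 1 k, lam j ^ t)) : ℝ) : EReal) ∧
      eps i ≤ ((1 + σ) * dw0 + 2 * eta 0) / (1 - σ) *
          (lam i ^ (t - 1) / ∑ j ∈ Finset.Icc 1 k, lam j ^ t) :=
  nehpe_pointwise_general Zs p w g m M hm hM dw hdw hstrong hlip T hdom hT0 z ztil hzZ hztilZ lam
    eps eta r σ hσ0 hσ1 hlam heps heta hr hincl herr dw0 hdw0 t k hk
end

section
/- For θ ∈ (0, (1+√5)/2], the number σ_θ = (3θ² - 7θ + 5 + √((3θ²-7θ+5)² - 4(2-θ)(3-θ)(θ-1)²)) / (2(3-θ)) is the largest root in σ of the quadratic equation det M_θ(σ) = 0, where M_θ(σ) is the symmetric 2×2 matrix with entries M₁₁ = σ(1+θ) - 1, M₁₂ = M₂₁ = (σ+θ-1)(1-θ), M₂₂ = σ - (1-θ)². Moreover det M_θ(σ) > 0 for every σ > σ_θ. -/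
set_option maxHeartbeats 2000000


/-- For `θ ∈ (0, (1+√5)/2]`, the number
`σ_θ = (3θ² - 7θ + 5 + √((3θ²-7θ+5)² - 4(2-θ)(3-θ)(θ-1)²)) / (2(3-θ))`
is the largest root in `σ` of `det M_θ(σ) = 0`, where
`det M_θ(σ) = (σ(1+θ)-1)(σ-(1-θ)²) - ((σ+θ-1)(1-θ))²`; moreover `det M_θ(σ) > 0` for
every `σ > σ_θ`. -/
theorem sigma_theta_largest_root (θ : ℝ) (hθ0 : 0 < θ) (hθ1 : θ ≤ (1 + Real.sqrt 5) / 2)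
    (detM : ℝ → ℝ)
    (hdetM : ∀ σ : ℝ, detM σ = (σ * (1 + θ) - 1) * (σ - (1 - θ)^2)
      - ((σ + θ - 1) * (1 - θ))^2)
    (σθ : ℝ)
    (hσθ : σθ = (3 * θ^2 - 7 * θ + 5 +
      Real.sqrt ((3 * θ^2 - 7 * θ + 5)^2 - 4 * (2 - θ) * (3 - θ) * (θ - 1)^2)) /
        (2 * (3 - θ))) :
    detM σθ = 0 ∧ (∀ σ : ℝ, detM σ = 0 → σ ≤ σθ) ∧ ∀ σ : ℝ, σθ < σ → 0 < detM σ := by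
  have h5 : Real.sqrt 5 ≤ 3 := by
    nlinarith [Real.sq_sqrt (show (0:ℝ) ≤ 5 by norm_num), Real.sqrt_nonneg 5]
  have hA : 0 < 3 - θ := by nlinarith
  have hD : 0 ≤ (3 * θ^2 - 7 * θ + 5)^2 - 4 * (2 - θ) * (3 - θ) * (θ - 1)^2 := by
    nlinarith [sq_nonneg (θ^2 - (7/5) * θ + 1/5), sq_nonneg (θ - 1), sq_nonneg θ,
      sq_nonneg (θ^2 - θ), sq_nonneg (θ - 1/2)]
  obtain ⟨s, hs0, hs2, hσθ'⟩ : ∃ s : ℝ, 0 ≤ s ∧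
      s ^ 2 = (3 * θ^2 - 7 * θ + 5)^2 - 4 * (2 - θ) * (3 - θ) * (θ - 1)^2 ∧
      σθ = (3 * θ^2 - 7 * θ + 5 + s) / (2 * (3 - θ)) :=
    ⟨Real.sqrt _, Real.sqrt_nonneg _, Real.sq_sqrt hD, hσθ⟩
  clear hσθ
  have hσ : 2 * (3 - θ) * σθ = (3 * θ^2 - 7 * θ + 5) + s := by
    rw [hσθ']; field_simp [hA.ne']
  have hx : 2 * (3 - θ) * σθ - (3 * θ^2 - 7 * θ + 5) = s := by linarith
  have hsq : (2 * (3 - θ) * σθ - (3 * θ^2 - 7 * θ + 5)) ^ 2 = s ^ 2 := by rw [hx]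
  have hroot : (3 - θ) * σθ^2 - (3 * θ^2 - 7 * θ + 5) * σθ + (2 - θ) * (θ - 1)^2 = 0 := by
    have h4A : (4 * (3 - θ)) ≠ 0 := by positivity
    have hroot4 : 4 * (3 - θ) * ((3 - θ) * σθ^2 - (3 * θ^2 - 7 * θ + 5) * σθ
        + (2 - θ) * (θ - 1)^2) = 0 := by linear_combination hsq + hs2
    exact (mul_eq_zero.mp hroot4).resolve_left h4A
  refine ⟨?_, ?_, ?_⟩
  · rw [hdetM]
    linear_combination θ * hroot
  · intro σ h
    rw [hdetM] at h
    have hq : θ * ((3 - θ) * σ^2 - (3 * θ^2 - 7 * θ + 5) * σ + (2 - θ) * (θ - 1)^2) = 0 := by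
      linear_combination h
    have hq' : (3 - θ) * σ^2 - (3 * θ^2 - 7 * θ + 5) * σ + (2 - θ) * (θ - 1)^2 = 0 :=
      (mul_eq_zero.mp hq).resolve_left hθ0.ne'
    have hsq' : (2 * (3 - θ) * σ - (3 * θ^2 - 7 * θ + 5)) ^ 2 = s ^ 2 := by
      linear_combination 4 * (3 - θ) * hq' - hs2
    have hle : 2 * (3 - θ) * σ - (3 * θ^2 - 7 * θ + 5) ≤ s := by
      calc 2 * (3 - θ) * σ - (3 * θ^2 - 7 * θ + 5)
          ≤ |2 * (3 - θ) * σ - (3 * θ^2 - 7 * θ + 5)| := le_abs_self _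
        _ = s := by rw [← Real.sqrt_sq_eq_abs, hsq', Real.sqrt_sq hs0]
    have h2 : 2 * (3 - θ) * σ ≤ 2 * (3 - θ) * σθ := by linarith
    exact le_of_mul_le_mul_left h2 (by linarith)
  · intro σ hσσ
    rw [hdetM]
    have hgt : s < 2 * (3 - θ) * σ - (3 * θ^2 - 7 * θ + 5) := by
      have := mul_lt_mul_of_pos_left hσσ (show (0:ℝ) < 2 * (3 - θ) by linarith)
      linarith
    have h4 : 0 < (2 * (3 - θ) * σ - (3 * θ^2 - 7 * θ + 5)) ^ 2 - s ^ 2 := by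
      have := pow_lt_pow_left₀ hgt hs0 two_ne_zero
      linarith
    have key : 4 * (3 - θ) * ((σ * (1 + θ) - 1) * (σ - (1 - θ)^2)
        - ((σ + θ - 1) * (1 - θ))^2)
        = θ * ((2 * (3 - θ) * σ - (3 * θ^2 - 7 * θ + 5)) ^ 2 - s ^ 2) := by
      linear_combination θ * hs2
    have h6 : 0 < 4 * (3 - θ) * ((σ * (1 + θ) - 1) * (σ - (1 - θ)^2)
        - ((σ + θ - 1) * (1 - θ))^2) := by rw [key]; exact mul_pos hθ0 h4
    have h4A : (0:ℝ) < 4 * (3 - θ) := by linarith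
    by_contra hc
    push_neg at hc
    nlinarith [mul_nonpos_of_nonneg_of_nonpos h4A.le hc]
end

section
/- For θ ∈ (0, (1+√5)/2], the number σ_θ = (3θ² - 7θ + 5 + √((3θ²-7θ+5)² - 4(2-θ)(3-θ)(θ-1)²)) / (2(3-θ)) satisfies 1/3 < max{(1-θ)², 1-θ, 1/(1+θ)} ≤ σ_θ ≤ 1. Moreover σ_θ < 1 for θ ∈ (0,(1+√5)/2) and σ_θ = 1 when θ = (1+√5)/2. -/
/-- For `θ ∈ (0, (1+√5)/2]`, the number
`σ_θ = (3θ² - 7θ + 5 + √((3θ²-7θ+5)² - 4(2-θ)(3-θ)(θ-1)²)) / (2(3-θ))`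
satisfies `1/3 < max{(1-θ)², 1-θ, 1/(1+θ)} ≤ σ_θ ≤ 1`; moreover `σ_θ < 1` for
`θ < (1+√5)/2` and `σ_θ = 1` when `θ = (1+√5)/2`. -/
theorem sigma_theta_bounds (θ : ℝ) (hθ0 : 0 < θ) (hθ1 : θ ≤ (1 + Real.sqrt 5) / 2)
    (σθ : ℝ)
    (hσθ : σθ = (3 * θ^2 - 7 * θ + 5 +
      Real.sqrt ((3 * θ^2 - 7 * θ + 5)^2 - 4 * (2 - θ) * (3 - θ) * (θ - 1)^2)) /
        (2 * (3 - θ))) :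
    1 / 3 < max (max ((1 - θ)^2) (1 - θ)) (1 / (1 + θ)) ∧
    max (max ((1 - θ)^2) (1 - θ)) (1 / (1 + θ)) ≤ σθ ∧
    σθ ≤ 1 ∧
    (θ < (1 + Real.sqrt 5) / 2 → σθ < 1) ∧
    (θ = (1 + Real.sqrt 5) / 2 → σθ = 1) := by
  have hs5 : Real.sqrt 5 ^ 2 = 5 := Real.sq_sqrt (by norm_num)
  have hs5' : 2 < Real.sqrt 5 := by
    nlinarith [Real.sqrt_nonneg 5, hs5]
  have hs5'' : Real.sqrt 5 < 3 := by
    nlinarith [Real.sqrt_nonneg 5, hs5]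
  have hθ2 : θ < 2 := by nlinarith
  have h3 : (0:ℝ) < 3 - θ := by linarith
  have hθsq : θ ^ 2 ≤ θ + 1 := by
    have e1 : 2 * θ - 1 ≤ Real.sqrt 5 := by linarith
    have e2 : (0:ℝ) ≤ Real.sqrt 5 + (2 * θ - 1) := by linarith
    nlinarith [mul_nonneg (sub_nonneg.2 e1) e2, hs5]
  -- 2a - b = 1 + 5θ - 3θ² > 0
  have hab : 0 < 1 + 5 * θ - 3 * θ ^ 2 := by
    nlinarith [hθ0, hθsq, mul_nonneg hθ0.le (sub_nonneg.2 hθsq)]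
  set D : ℝ := (3 * θ^2 - 7 * θ + 5)^2 - 4 * (2 - θ) * (3 - θ) * (θ - 1)^2 with hD
  -- key: f(s) ≤ 0 → s ≤ σθ
  have key : ∀ s : ℝ, (3 - θ) * s ^ 2 - (3 * θ^2 - 7 * θ + 5) * s
      + (2 - θ) * (θ - 1)^2 ≤ 0 → s ≤ σθ := by
    intro s hf
    have h1 : (2 * (3 - θ) * s - (3 * θ^2 - 7 * θ + 5)) ^ 2 ≤ D := by
      have := mul_nonneg h3.le (neg_nonneg.2 hf)
      rw [hD]; nlinarith [this]
    have h2 : 2 * (3 - θ) * s - (3 * θ^2 - 7 * θ + 5) ≤ Real.sqrt D := by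
      calc 2 * (3 - θ) * s - (3 * θ^2 - 7 * θ + 5)
          ≤ |2 * (3 - θ) * s - (3 * θ^2 - 7 * θ + 5)| := le_abs_self _
        _ = Real.sqrt ((2 * (3 - θ) * s - (3 * θ^2 - 7 * θ + 5)) ^ 2) :=
            (Real.sqrt_sq_eq_abs _).symm
        _ ≤ Real.sqrt D := Real.sqrt_le_sqrt h1
    rw [hσθ, le_div_iff₀ (by linarith : (0:ℝ) < 2 * (3 - θ))]
    linarith
  have l1 : (1 - θ)^2 ≤ σθ := by
    apply key
    nlinarith [mul_nonneg hθ0.le (sq_nonneg ((θ - 1)^2))]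
  have l3 : 1 / (1 + θ) ≤ σθ := by
    apply key
    have h1θ : (0:ℝ) < 1 + θ := by linarith
    have heq : (3 - θ) * (1 / (1 + θ)) ^ 2 - (3 * θ^2 - 7 * θ + 5) * (1 / (1 + θ))
        + (2 - θ) * (θ - 1)^2 = (-(θ^3) * (θ - 1)^2) / (1 + θ)^2 := by
      field_simp
      ring
    rw [heq]
    apply div_nonpos_of_nonpos_of_nonneg
    · nlinarith [mul_nonneg (pow_nonneg hθ0.le 3) (sq_nonneg (θ - 1))]
    · positivity
  have l2 : 1 - θ ≤ σθ := by
    rcases le_or_gt θ 1 with h | h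
    · apply key
      nlinarith [mul_nonneg (sq_nonneg θ) (sub_nonneg.2 h)]
    · calc 1 - θ ≤ 0 := by linarith
        _ ≤ (1 - θ)^2 := sq_nonneg _
        _ ≤ σθ := l1
  have hmax : max (max ((1 - θ)^2) (1 - θ)) (1 / (1 + θ)) ≤ σθ :=
    max_le (max_le l1 l2) l3
  have hupper : σθ ≤ 1 := by
    have hDle : D ≤ (1 + 5 * θ - 3 * θ ^ 2) ^ 2 := by
      have hid : (1 + 5 * θ - 3 * θ ^ 2) ^ 2 - D = 4 * (3 - θ) * θ * (θ + 1 - θ ^ 2) := by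
        rw [hD]; ring
      have hpos := mul_nonneg (mul_nonneg (mul_nonneg (by norm_num : (0:ℝ) ≤ 4) h3.le) hθ0.le)
        (sub_nonneg.2 hθsq)
      linarith [hpos, hid.ge, hid.le]
    have h2 : Real.sqrt D ≤ 1 + 5 * θ - 3 * θ ^ 2 := by
      calc Real.sqrt D ≤ Real.sqrt ((1 + 5 * θ - 3 * θ ^ 2) ^ 2) := Real.sqrt_le_sqrt hDle
        _ = 1 + 5 * θ - 3 * θ ^ 2 := Real.sqrt_sq hab.le
    rw [hσθ, div_le_one (by linarith : (0:ℝ) < 2 * (3 - θ))]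
    linarith
  refine ⟨?_, hmax, hupper, ?_, ?_⟩
  · have h13 : (1:ℝ) / 3 < 1 / (1 + θ) := by
      rw [div_lt_div_iff₀ (by norm_num) (by linarith)]
      linarith
    exact lt_of_lt_of_le h13 (le_max_right _ _)
  · intro hlt
    have hθsq' : θ ^ 2 < θ + 1 := by
      have e1 : 2 * θ - 1 < Real.sqrt 5 := by linarith
      have e2 : (0:ℝ) < Real.sqrt 5 + (2 * θ - 1) := by linarith
      nlinarith [mul_pos (sub_pos.2 e1) e2, hs5]
    have hDlt : D < (1 + 5 * θ - 3 * θ ^ 2) ^ 2 := by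
      have hid : (1 + 5 * θ - 3 * θ ^ 2) ^ 2 - D = 4 * (3 - θ) * θ * (θ + 1 - θ ^ 2) := by
        rw [hD]; ring
      have hpos := mul_pos (mul_pos (mul_pos (by norm_num : (0:ℝ) < 4) h3) hθ0)
        (sub_pos.2 hθsq')
      linarith [hpos, hid.ge, hid.le]
    have h2 : Real.sqrt D < 1 + 5 * θ - 3 * θ ^ 2 := (Real.sqrt_lt' hab).2 hDlt
    rw [hσθ, div_lt_one (by linarith : (0:ℝ) < 2 * (3 - θ))]
    linarith
  · intro heq
    have hq : θ ^ 2 = θ + 1 := by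
      rw [heq]; linear_combination hs5 / 4
    have hDeq : D = (1 + 5 * θ - 3 * θ ^ 2) ^ 2 := by
      rw [hD]; linear_combination (4 * θ * (3 - θ)) * hq
    have h2 : Real.sqrt D = 1 + 5 * θ - 3 * θ ^ 2 := by
      rw [hDeq, Real.sqrt_sq hab.le]
    rw [hσθ, div_eq_one_iff_eq (by linarith : (2 * (3 - θ)) ≠ 0)]
    rw [h2]; ring
end

section
/- For θ ∈ (0, (1+√5)/2], the symmetric 2×2 matrix M_θ(σ_θ) with entries M₁₁ = σ_θ(1+θ) - 1, M₁₂ = M₂₁ = (σ_θ+θ-1)(1-θ), M₂₂ = σ_θ - (1-θ)² is positive semidefinite, where σ_θ = (3θ² - 7θ + 5 + √((3θ²-7θ+5)² - 4(2-θ)(3-θ)(θ-1)²)) / (2(3-θ)). -/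
/-!
The determinant of `M_θ(x)` equals `θ · f(x)` with `f(x) = (3-θ)x² - (3θ²-7θ+5)x + (2-θ)(θ-1)²`,
and `σ_θ` is the larger root of `f`, so `det M_θ(σ_θ) = 0`. At `x = 1/(1+θ)` and `x = (1-θ)²` one
diagonal entry of `M_θ(x)` vanishes, so the determinant is `-M₁₂² ≤ 0` and `f(x) ≤ 0`; hence both
points lie below the larger root `σ_θ`, which makes both diagonal entries of `M_θ(σ_θ)` nonnegative.
-/

open Matrix in
theorem Matrix.posSemidef_fin_two_of_sq_le {a b c : ℝ} (ha : 0 ≤ a) (hc : 0 ≤ c)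
    (hb : b ^ 2 ≤ a * c) : (!![a, b; b, c]).PosSemidef := by
  refine PosSemidef.of_dotProduct_mulVec_nonneg ?_ fun x ↦ ?_
  · ext i j
    fin_cases i <;> fin_cases j <;> rfl
  · have hform : star x ⬝ᵥ (!![a, b; b, c] *ᵥ x) = a * x 0 ^ 2 + 2 * b * x 0 * x 1 + c * x 1 ^ 2 := by
      simp only [star_trivial, dotProduct, mulVec, Fin.sum_univ_two, of_apply, cons_val',
        cons_val_zero, cons_val_one, empty_val', cons_val_fin_one]
      ring
    rw [hform]
    rcases ha.eq_or_lt with rfl | ha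
    · obtain rfl : b = 0 := by nlinarith
      nlinarith
    · refine nonneg_of_mul_nonneg_right ?_ ha
      nlinarith [sq_nonneg (a * x 0 + b * x 1), sq_nonneg (x 1)]

theorem le_quadratic_root_of_nonpos {a b c x : ℝ} (ha : 0 < a)
    (hx : a * (x * x) + b * x + c ≤ 0) :
    0 ≤ discrim a b c ∧ x ≤ (-b + √(discrim a b c)) / (2 * a) := by
  have hsq : (2 * a * x + b) ^ 2 ≤ discrim a b c := by
    rw [discrim]; nlinarith
  refine ⟨(sq_nonneg _).trans hsq, ?_⟩
  rw [le_div_iff₀ (by positivity)]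
  linarith [(le_abs_self _).trans (Real.abs_le_sqrt hsq)]

theorem quadratic_root_eq_zero {a b c : ℝ} (ha : a ≠ 0) (hd : 0 ≤ discrim a b c) :
    a * ((-b + √(discrim a b c)) / (2 * a) * ((-b + √(discrim a b c)) / (2 * a))) +
      b * ((-b + √(discrim a b c)) / (2 * a)) + c = 0 :=
  (quadratic_eq_zero_iff ha (Real.mul_self_sqrt hd).symm _).mpr (Or.inl rfl)

theorem det_matrix_theta_eq_mul_quadratic (θ x : ℝ) :
    (x * (1 + θ) - 1) * (x - (1 - θ) ^ 2) - ((x + θ - 1) * (1 - θ)) ^ 2 =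
      θ * ((3 - θ) * (x * x) + -(3 * θ ^ 2 - 7 * θ + 5) * x + (2 - θ) * (θ - 1) ^ 2) := by
  ring

/-- For `θ ∈ (0, (1+√5)/2]`, the symmetric 2×2 matrix `M_θ(σ_θ)` with entries
`M₁₁ = σ_θ(1+θ) - 1`, `M₁₂ = M₂₁ = (σ_θ+θ-1)(1-θ)`, `M₂₂ = σ_θ - (1-θ)²` is positive
semidefinite, where
`σ_θ = (3θ² - 7θ + 5 + √((3θ²-7θ+5)² - 4(2-θ)(3-θ)(θ-1)²)) / (2(3-θ))`. -/
theorem matrix_theta_posSemidef (θ : ℝ) (hθ0 : 0 < θ)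
    (hθ1 : θ ≤ (1 + Real.sqrt 5) / 2)
    (σθ : ℝ)
    (hσθ : σθ = (3 * θ^2 - 7 * θ + 5 +
      Real.sqrt ((3 * θ^2 - 7 * θ + 5)^2 - 4 * (2 - θ) * (3 - θ) * (θ - 1)^2)) /
        (2 * (3 - θ))) :
    Matrix.PosSemidef
      !![σθ * (1 + θ) - 1, (σθ + θ - 1) * (1 - θ);
         (σθ + θ - 1) * (1 - θ), σθ - (1 - θ)^2] := by
  have hθ3 : θ < 3 := by
    nlinarith [Real.sq_sqrt (show (0 : ℝ) ≤ 5 by norm_num), Real.sqrt_nonneg 5]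
  set f : ℝ → ℝ := fun x ↦
    (3 - θ) * (x * x) + -(3 * θ ^ 2 - 7 * θ + 5) * x + (2 - θ) * (θ - 1) ^ 2
  have hσ : σθ = (-(-(3 * θ ^ 2 - 7 * θ + 5)) +
      √(discrim (3 - θ) (-(3 * θ ^ 2 - 7 * θ + 5)) ((2 - θ) * (θ - 1) ^ 2))) / (2 * (3 - θ)) := by
    rw [hσθ, discrim]; ring_nf
  have hf_nonpos {x : ℝ} (hx : (x * (1 + θ) - 1) * (x - (1 - θ) ^ 2) = 0) : f x ≤ 0 := by
    refine nonpos_of_mul_nonpos_right ?_ hθ0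
    nlinarith [det_matrix_theta_eq_mul_quadratic θ x, sq_nonneg ((x + θ - 1) * (1 - θ))]
  have hle_σ {x : ℝ} (hx : (x * (1 + θ) - 1) * (x - (1 - θ) ^ 2) = 0) : x ≤ σθ :=
    hσ ▸ (le_quadratic_root_of_nonpos (by linarith) (hf_nonpos hx)).2
  have h11 : 0 ≤ σθ * (1 + θ) - 1 := by
    have := hle_σ (x := 1 / (1 + θ)) (by field_simp; ring)
    rw [div_le_iff₀ (by linarith)] at this
    linarith
  have h22 : 0 ≤ σθ - (1 - θ) ^ 2 := by
    linarith [hle_σ (x := (1 - θ) ^ 2) (by ring)]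
  have hdet : ((σθ + θ - 1) * (1 - θ)) ^ 2 ≤ (σθ * (1 + θ) - 1) * (σθ - (1 - θ) ^ 2) := by
    have hdisc := (le_quadratic_root_of_nonpos (by linarith)
      (hf_nonpos (x := (1 - θ) ^ 2) (by ring))).1
    have hroot : f σθ = 0 := hσ ▸ quadratic_root_eq_zero (by linarith) hdisc
    nlinarith [det_matrix_theta_eq_mul_quadratic θ σθ]
  exact Matrix.posSemidef_fin_two_of_sq_le h11 h22 hdet
end

section
/- Let {(s_k, y_k, x_k)} be generated by the proximal ADMM with θ > 0 and define Δy_k = y_k - y_{k-1}, Δx_k = x_k - x_{k-1}. Then for every k ≥ 2: (1/θ)⟨CΔy_k, Δx_k⟩ ≥ ((1-θ)/θ)⟨CΔy_k, Δx_{k-1}⟩ + (1/2)‖Δy_k‖²_G - (1/2)‖Δy_{k-1}‖²_G, where ‖y‖²_G = ⟨Gy, y⟩. -/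
/-- Convexity for an extended-real-valued function. -/
def ERealConvexOn {Y : Type*} [AddCommGroup Y] [Module ℝ Y] (f : Y → EReal) : Prop :=
  ∀ x y : Y, ∀ a b : ℝ, 0 ≤ a → 0 ≤ b → a + b = 1 →
    f (a • x + b • y) ≤ (a : EReal) * f x + (b : EReal) * f y

/-!
The `y`-update of proximal ADMM minimises `f` plus a smooth quadratic, so for convex `f` the
first-order optimality condition says that `ξ_j = (1/θ) C*(x_j - (1-θ) x_{j-1}) - G Δy_j` is a
subgradient of `f` at `y_j`. Monotonicity of the subdifferential at `y_k` and `y_{k-1}` gives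
`⟨ξ_k - ξ_{k-1}, Δy_k⟩ ≥ 0`, and `⟨G Δy_{k-1}, Δy_k⟩ ≤ (‖Δy_k‖²_G + ‖Δy_{k-1}‖²_G) / 2` turns this
into the claim.
-/

open Set Filter Topology
open scoped RealInnerProductSpace

theorem ne_top_of_forall_add_coe_le {Y : Type*} {f : Y → EReal} {φ : Y → ℝ} {u : Y} {r : ℝ}
    (hne : ∃ w, f w ≠ ⊤) (hmin : ∀ w, f u + r ≤ f w + φ w) : f u ≠ ⊤ := by
  obtain ⟨w, hw⟩ := hne
  intro hu
  have := hmin w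
  rw [hu, EReal.top_add_coe, top_le_iff] at this
  exact EReal.add_ne_top hw (EReal.coe_ne_top _) this

section Subgradient

variable {Y : Type*} [AddCommGroup Y] [Module ℝ Y]

def ERealHasSubgradientAt (f : Y → EReal) (ℓ : Module.Dual ℝ Y) (u : Y) : Prop :=
  ∀ w, f u + (ℓ (w - u) : EReal) ≤ f w

theorem ERealHasSubgradientAt.apply_sub_nonneg {f : Y → EReal} {ℓ m : Module.Dual ℝ Y}
    {u v : Y} (hu : ERealHasSubgradientAt f ℓ u) (hv : ERealHasSubgradientAt f m v)
    (hu_top : f u ≠ ⊤) (hu_bot : f u ≠ ⊥) : 0 ≤ ℓ (u - v) - m (u - v) := by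
  have huv := hu v
  have hvu := hv u
  rw [← EReal.coe_toReal hu_top hu_bot, ← EReal.coe_add] at huv
  rw [← EReal.coe_toReal hu_top hu_bot] at hvu
  induction hb : f v using EReal.rec with
  | bot => exact absurd (hb ▸ huv) (EReal.bot_lt_coe _).not_ge
  | top => exact absurd (hb ▸ hvu) (by rw [EReal.top_add_coe]; exact (EReal.coe_lt_top _).not_ge)
  | coe b =>
    rw [hb, ← EReal.coe_add, EReal.coe_le_coe_iff] at hvu
    rw [hb, EReal.coe_le_coe_iff] at huv
    have : ℓ (v - u) = - ℓ (u - v) := by rw [← map_neg, neg_sub]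
    linarith

theorem ERealConvexOn.le_add_of_minimizer {f : Y → EReal} (hf : ERealConvexOn f) {φ : Y → ℝ}
    {u v : Y} {a b L : ℝ} (hmin : ∀ w, f u + φ u ≤ f w + φ w) (hu : f u = a) (hv : f v = b)
    (hφ : HasDerivWithinAt (fun t : ℝ => φ (u + t • (v - u))) L (Ioi 0) 0) : a ≤ b + L := by
  -- Convexity along the segment bounds the difference quotients of `φ` below by `f u - f v`.
  have hslope : ∀ t ∈ Ioc (0 : ℝ) 1, a - b ≤ slope (fun t : ℝ => φ (u + t • (v - u))) 0 t := by
    rintro t ⟨ht0, ht1⟩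
    have hconv := hf u v (1 - t) t (by linarith) ht0.le (by ring)
    rw [show (1 - t) • u + t • v = u + t • (v - u) by module, hu, hv] at hconv
    have hstep := (hmin _).trans (add_le_add_left hconv _)
    rw [hu] at hstep
    norm_cast at hstep
    rw [slope_def_field, zero_smul, add_zero, sub_zero, le_div_iff₀ ht0]
    linarith
  have hlim : Tendsto (slope (fun t : ℝ => φ (u + t • (v - u))) 0) (𝓝[>] 0) (𝓝 L) :=
    (hasDerivWithinAt_iff_tendsto_slope' (lt_irrefl 0)).mp hφ
  have := ge_of_tendsto hlim (mem_of_superset (Ioc_mem_nhdsGT one_pos) hslope)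
  linarith

theorem ERealConvexOn.hasSubgradientAt_of_minimizer {f : Y → EReal} (hf : ERealConvexOn f)
    (hbot : ∀ w, f w ≠ ⊥) (hne : ∃ w, f w ≠ ⊤) {φ : Y → ℝ} {u : Y} {ℓ : Module.Dual ℝ Y}
    (hmin : ∀ w, f u + φ u ≤ f w + φ w)
    (hφ : ∀ d, HasDerivWithinAt (fun t : ℝ => φ (u + t • d)) (-ℓ d) (Ioi 0) 0) :
    ERealHasSubgradientAt f ℓ u := by
  intro w
  by_cases hw : f w = ⊤
  · rw [hw]
    exact le_top
  have hu := EReal.coe_toReal (ne_top_of_forall_add_coe_le hne hmin) (hbot u)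
  rw [← EReal.coe_toReal hw (hbot w), ← hu, ← EReal.coe_add, EReal.coe_le_coe_iff]
  linarith [hf.le_add_of_minimizer hmin hu.symm (EReal.coe_toReal hw (hbot w)).symm (hφ (w - u))]

end Subgradient

section ProximalStep

variable {Y X : Type*} [NormedAddCommGroup Y] [InnerProductSpace ℝ Y]
  [NormedAddCommGroup X] [InnerProductSpace ℝ X]

theorem hasDerivAt_add_smul {E : Type*} [NormedAddCommGroup E] [NormedSpace ℝ E] (a b : E)
    (t : ℝ) : HasDerivAt (fun t : ℝ => a + t • b) b t := by
  simpa using ((hasDerivAt_id t).smul_const b).const_add a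

theorem hasDerivAt_proxAugmentedLagrangian (C : Y →ₗ[ℝ] X) (G : Y →ₗ[ℝ] Y)
    (hG : G.IsSymmetric) (z r : X) (β : ℝ) (p u d : Y) :
    HasDerivAt (fun t : ℝ => -⟪z, C (u + t • d)⟫ + β / 2 * ‖C (u + t • d) + r‖ ^ 2
        + 1 / 2 * ⟪u + t • d - p, G (u + t • d - p)⟫)
      (-⟪z, C d⟫ + β * ⟪C u + r, C d⟫ + ⟪G (u - p), d⟫) 0 := by
  have hC : HasDerivAt (fun t : ℝ => C (u + t • d)) (C d) 0 := by
    simpa only [map_add, map_smul] using hasDerivAt_add_smul (C u) (C d) 0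
  have hp : HasDerivAt (fun t : ℝ => u + t • d - p) d 0 := by
    simpa only [add_sub_right_comm] using hasDerivAt_add_smul (u - p) d 0
  have hGp : HasDerivAt (fun t : ℝ => G (u + t • d - p)) (G d) 0 := by
    simpa only [add_sub_right_comm, map_add, map_smul] using hasDerivAt_add_smul (G (u - p)) (G d) 0
  refine ((((hasDerivAt_const (0 : ℝ) z).inner ℝ hC).fun_neg.fun_add
    ((hC.add_const r).norm_sq.const_mul (β / 2))).fun_add
      ((hp.inner ℝ hGp).const_mul (1 / 2))).congr_deriv ?_
  simp only [zero_smul, add_zero, inner_zero_left]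
  rw [← hG (u - p) d, ← real_inner_comm d (G (u - p))]
  ring

/-- The functional is `⟪ξ, ·⟫` for `ξ = θ⁻¹ C*(z' - (1 - θ) z) - G (u - p)`; working in the dual
avoids the adjoint of `C`. -/
theorem admm_yStep_hasSubgradientAt {f : Y → EReal} (hfbot : ∀ w, f w ≠ ⊥) (hfne : ∃ w, f w ≠ ⊤)
    (hfconv : ERealConvexOn f) (C : Y →ₗ[ℝ] X) (G : Y →ₗ[ℝ] Y)
    (hG : G.IsSymmetric) {z z' b c : X} {β θ : ℝ} (hθ : θ ≠ 0) {p u : Y}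
    (hmin : ∀ w,
      f u + ((-⟪z, C u⟫ + β / 2 * ‖C u + b - c‖ ^ 2 + 1 / 2 * ⟪u - p, G (u - p)⟫ : ℝ) : EReal)
        ≤ f w + ((-⟪z, C w⟫ + β / 2 * ‖C w + b - c‖ ^ 2 + 1 / 2 * ⟪w - p, G (w - p)⟫ : ℝ) : EReal))
    (hz' : z' = z - (θ * β) • (C u + b - c)) :
    ERealHasSubgradientAt f (θ⁻¹ • innerₗ X (z' - (1 - θ) • z) ∘ₗ C - innerₗ Y (G (u - p))) u := by
  refine hfconv.hasSubgradientAt_of_minimizer hfbot hfne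
    (φ := fun w => -⟪z, C w⟫ + β / 2 * ‖C w + b - c‖ ^ 2 + 1 / 2 * ⟪w - p, G (w - p)⟫) hmin
    fun d => ?_
  have hderiv := (hasDerivAt_proxAugmentedLagrangian C G hG z (b - c) β p u d).hasDerivWithinAt
    (s := Ioi 0)
  simp only [← add_sub_assoc] at hderiv
  refine hderiv.congr_deriv ?_
  simp only [LinearMap.sub_apply, LinearMap.smul_apply, LinearMap.comp_apply, innerₗ_apply_apply,
    hz', inner_sub_right, inner_smul_right, smul_eq_mul, real_inner_comm (C d)]
  field_simp
  ring

theorem LinearMap.IsPositive.inner_map_le_half_add {G : Y →ₗ[ℝ] Y} (hG : G.IsPositive) (u v : Y) :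
    ⟪G u, v⟫ ≤ 1 / 2 * (⟪G u, u⟫ + ⟪G v, v⟫) := by
  have hnonneg := hG.inner_nonneg_left (u - v)
  have hsymm : ⟪G v, u⟫ = ⟪G u, v⟫ := by rw [hG.isSymmetric, real_inner_comm]
  simp only [map_sub, inner_sub_left, inner_sub_right] at hnonneg
  linarith

end ProximalStep

theorem admm_delta_inequality_general
    {S Y X : Type*}
    [NormedAddCommGroup S] [InnerProductSpace ℝ S]
    [NormedAddCommGroup Y] [InnerProductSpace ℝ Y]
    [NormedAddCommGroup X] [InnerProductSpace ℝ X]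
    (f : Y → EReal)
    (hfbot : ∀ y, f y ≠ ⊥) (hfne : ∃ y, f y ≠ ⊤)
    (hfconv : ERealConvexOn f)
    (C : Y →ₗ[ℝ] X) (D : S →ₗ[ℝ] X)
    (Gop : Y →ₗ[ℝ] Y)
    (hGsa : ∀ u v : Y, (inner ℝ (Gop u) v : ℝ) = (inner ℝ u (Gop v) : ℝ))
    (hGpsd : ∀ v : Y, 0 ≤ (inner ℝ (Gop v) v : ℝ))
    (c : X) (β θ : ℝ) (hθ : 0 < θ)
    (s : ℕ → S) (y : ℕ → Y) (x : ℕ → X)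
    (hy : ∀ k, 1 ≤ k → ∀ yv : Y,
      f (y k) + ((-(inner ℝ (x (k - 1)) (C (y k)) : ℝ)
          + β / 2 * ‖C (y k) + D (s k) - c‖^2
          + 1 / 2 * (inner ℝ (y k - y (k - 1)) (Gop (y k - y (k - 1))) : ℝ) : ℝ) : EReal)
      ≤ f yv + ((-(inner ℝ (x (k - 1)) (C yv) : ℝ)
          + β / 2 * ‖C yv + D (s k) - c‖^2
          + 1 / 2 * (inner ℝ (yv - y (k - 1)) (Gop (yv - y (k - 1))) : ℝ) : ℝ) : EReal))
    (hx : ∀ k, 1 ≤ k → x k = x (k - 1) - (θ * β) • (C (y k) + D (s k) - c))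
    (k : ℕ) (hk : 2 ≤ k) :
    (1 / θ) * (inner ℝ (C (y k - y (k - 1))) (x k - x (k - 1)) : ℝ)
      ≥ ((1 - θ) / θ) * (inner ℝ (C (y k - y (k - 1))) (x (k - 1) - x (k - 2)) : ℝ)
        + 1 / 2 * (inner ℝ (Gop (y k - y (k - 1))) (y k - y (k - 1)) : ℝ)
        - 1 / 2 * (inner ℝ (Gop (y (k - 1) - y (k - 2))) (y (k - 1) - y (k - 2)) : ℝ) := by
  have hsub : ∀ j, 1 ≤ j → ERealHasSubgradientAt f
      (θ⁻¹ • innerₗ X (x j - (1 - θ) • x (j - 1)) ∘ₗ C - innerₗ Y (Gop (y j - y (j - 1)))) (y j) :=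
    fun j hj => admm_yStep_hasSubgradientAt hfbot hfne hfconv C Gop hGsa hθ.ne' (hy j hj) (hx j hj)
  have hmono := (hsub k (by omega)).apply_sub_nonneg (hsub (k - 1) (by omega))
    (ne_top_of_forall_add_coe_le hfne (hy k (by omega))) (hfbot _)
  have hyoung := ((Gop.isPositive_iff).mpr ⟨hGsa, hGpsd⟩).inner_map_le_half_add
    (y (k - 1) - y (k - 2)) (y k - y (k - 1))
  rw [show k - 1 - 1 = k - 2 by omega] at hmono
  set Δ := y k - y (k - 1)
  set Δ' := y (k - 1) - y (k - 2)
  simp only [LinearMap.sub_apply, LinearMap.smul_apply, LinearMap.comp_apply, innerₗ_apply_apply,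
    smul_eq_mul, inner_sub_left, real_inner_smul_left] at hmono
  simp only [← real_inner_comm (C Δ), inner_sub_left]
  linear_combination hmono + hyoung

/-- Let `{(s_k, y_k, x_k)}` be generated by the proximal ADMM with `θ > 0`, and set
`Δy_k = y_k - y_{k-1}`, `Δx_k = x_k - x_{k-1}`. Then for every `k ≥ 2`:
`(1/θ)⟨CΔy_k, Δx_k⟩ ≥ ((1-θ)/θ)⟨CΔy_k, Δx_{k-1}⟩ + (1/2)‖Δy_k‖²_G - (1/2)‖Δy_{k-1}‖²_G`,
where `‖y‖²_G = ⟨Gy, y⟩`. -/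
theorem admm_delta_inequality
    {S Y X : Type*}
    [NormedAddCommGroup S] [InnerProductSpace ℝ S] [FiniteDimensional ℝ S]
    [NormedAddCommGroup Y] [InnerProductSpace ℝ Y] [FiniteDimensional ℝ Y]
    [NormedAddCommGroup X] [InnerProductSpace ℝ X] [FiniteDimensional ℝ X]
    (f : Y → EReal) (g : S → EReal)
    (hfbot : ∀ y, f y ≠ ⊥) (hfne : ∃ y, f y ≠ ⊤) (hflsc : LowerSemicontinuous f)
    (hfconv : ERealConvexOn f)
    (hgbot : ∀ s, g s ≠ ⊥) (hgne : ∃ s, g s ≠ ⊤) (hglsc : LowerSemicontinuous g)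
    (hgconv : ERealConvexOn g)
    (C : Y →ₗ[ℝ] X) (D : S →ₗ[ℝ] X)
    (Hop : S →ₗ[ℝ] S) (Gop : Y →ₗ[ℝ] Y)
    (hHsa : ∀ u v : S, (inner ℝ (Hop u) v : ℝ) = (inner ℝ u (Hop v) : ℝ))
    (hHpsd : ∀ v : S, 0 ≤ (inner ℝ (Hop v) v : ℝ))
    (hGsa : ∀ u v : Y, (inner ℝ (Gop u) v : ℝ) = (inner ℝ u (Gop v) : ℝ))
    (hGpsd : ∀ v : Y, 0 ≤ (inner ℝ (Gop v) v : ℝ))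
    (c : X) (β θ : ℝ) (hβ : 0 < β) (hθ : 0 < θ)
    (s : ℕ → S) (y : ℕ → Y) (x : ℕ → X)
    (hs : ∀ k, 1 ≤ k → ∀ sv : S,
      g (s k) + ((-(inner ℝ (x (k - 1)) (D (s k)) : ℝ)
          + β / 2 * ‖C (y (k - 1)) + D (s k) - c‖^2
          + 1 / 2 * (inner ℝ (s k - s (k - 1)) (Hop (s k - s (k - 1))) : ℝ) : ℝ) : EReal)
      ≤ g sv + ((-(inner ℝ (x (k - 1)) (D sv) : ℝ)
          + β / 2 * ‖C (y (k - 1)) + D sv - c‖^2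
          + 1 / 2 * (inner ℝ (sv - s (k - 1)) (Hop (sv - s (k - 1))) : ℝ) : ℝ) : EReal))
    (hy : ∀ k, 1 ≤ k → ∀ yv : Y,
      f (y k) + ((-(inner ℝ (x (k - 1)) (C (y k)) : ℝ)
          + β / 2 * ‖C (y k) + D (s k) - c‖^2
          + 1 / 2 * (inner ℝ (y k - y (k - 1)) (Gop (y k - y (k - 1))) : ℝ) : ℝ) : EReal)
      ≤ f yv + ((-(inner ℝ (x (k - 1)) (C yv) : ℝ)
          + β / 2 * ‖C yv + D (s k) - c‖^2
          + 1 / 2 * (inner ℝ (yv - y (k - 1)) (Gop (yv - y (k - 1))) : ℝ) : ℝ) : EReal))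
    (hx : ∀ k, 1 ≤ k → x k = x (k - 1) - (θ * β) • (C (y k) + D (s k) - c))
    (k : ℕ) (hk : 2 ≤ k) :
    (1 / θ) * (inner ℝ (C (y k - y (k - 1))) (x k - x (k - 1)) : ℝ)
      ≥ ((1 - θ) / θ) * (inner ℝ (C (y k - y (k - 1))) (x (k - 1) - x (k - 2)) : ℝ)
        + 1 / 2 * (inner ℝ (Gop (y k - y (k - 1))) (y k - y (k - 1)) : ℝ)
        - 1 / 2 * (inner ℝ (Gop (y (k - 1) - y (k - 2))) (y (k - 1) - y (k - 2)) : ℝ) :=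
  admm_delta_inequality_general f hfbot hfne hfconv C D Gop hGsa hGpsd c β θ hθ s y x hy hx k hk
end
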